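/- arXiv:2409.20363 — 2 statements merged into one kernel-verified Lean document; each statement's English description precedes it below -/
import Mathlib

section
/- For 1 < α ≤ 2 and j ≥ 1, the coefficients ρ_j^{(α)} = (−1)^j Γ(α+1) / (Γ(α/2 − j + 1) Γ(α/2 + j + 1)) satisfy ρ_j^{(α)} ≤ 0, while ρ₀^{(α)} = Γ(α+1)/Γ(α/2+1)² ≥ 0. -/
/-!
For `0 < s < 1` the recursion `Γ(x + 1) = x Γ(x)` moves the sign of `Γ` across each of the
intervals `(s - k, s - k + 1)`, so `(-1)^k Γ(s - k) > 0`. With `s = α/2` this says that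
`(-1)^j Γ(α/2 - j + 1)` is negative for `j ≥ 1`; at `α = 2` it is `-1` for `j = 1` and vanishes
at the poles of `Γ` for `j ≥ 2`. The other two `Γ` factors in `ρ_j^{(α)}` are positive.
-/

/-- The coefficients `ρ_j^{(α)} = (−1)^j Γ(α+1)/(Γ(α/2 − j + 1)Γ(α/2 + j + 1))`. -/
noncomputable def rhoC (α : ℝ) (j : ℕ) : ℝ :=
  (-1) ^ j * Real.Gamma (α + 1) /
    (Real.Gamma (α / 2 - j + 1) * Real.Gamma (α / 2 + j + 1))

open Real

theorem neg_one_pow_mul_Gamma_sub_natCast_pos {s : ℝ} (hs0 : 0 < s) (hs1 : s < 1) (k : ℕ) :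
    0 < (-1) ^ k * Gamma (s - k) := by
  induction k with
  | zero => simpa using Gamma_pos_of_pos hs0
  | succ k ih =>
    have hneg : s - (k + 1 : ℕ) < 0 := by push_cast; linarith [(k.cast_nonneg : (0 : ℝ) ≤ k)]
    have hrec : Gamma (s - k) = (s - (k + 1 : ℕ)) * Gamma (s - (k + 1 : ℕ)) := by
      rw [← Gamma_add_one hneg.ne]; push_cast; ring_nf
    rw [hrec] at ih
    rw [pow_succ]
    nlinarith

theorem neg_one_pow_mul_Gamma_sub_natCast_add_one_nonpos {s : ℝ} (hs0 : 0 < s) (hs1 : s ≤ 1)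
    {j : ℕ} (hj : 1 ≤ j) : (-1) ^ j * Gamma (s - j + 1) ≤ 0 := by
  obtain ⟨k, rfl⟩ := Nat.exists_eq_add_of_le' hj
  have harg : s - (k + 1 : ℕ) + 1 = s - k := by push_cast; ring
  rw [harg, pow_succ, mul_comm _ (-1 : ℝ), mul_assoc, neg_one_mul, neg_nonpos]
  rcases hs1.lt_or_eq with hs1 | rfl
  · exact (neg_one_pow_mul_Gamma_sub_natCast_pos hs0 hs1 k).le
  · rcases k with _ | k
    · simp
    · have hpole : (1 : ℝ) - (k + 1 : ℕ) = -k := by push_cast; ring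
      rw [hpole, Gamma_neg_nat_eq_zero, mul_zero]

theorem rhoC_eq (α : ℝ) (j : ℕ) :
    rhoC α j = Gamma (α + 1) / Gamma (α / 2 + j + 1) * ((-1) ^ j * Gamma (α / 2 - j + 1))⁻¹ := by
  rw [rhoC, mul_inv, ← inv_pow, inv_neg_one]
  ring

theorem rhoC_nonpos {α : ℝ} (h0 : 0 < α) (h2 : α ≤ 2) {j : ℕ} (hj : 1 ≤ j) : rhoC α j ≤ 0 := by
  rw [rhoC_eq]
  refine mul_nonpos_of_nonneg_of_nonpos (div_nonneg ?_ ?_) (inv_nonpos.mpr ?_)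
  · exact (Gamma_pos_of_pos (by linarith)).le
  · exact (Gamma_pos_of_pos (by positivity)).le
  · exact neg_one_pow_mul_Gamma_sub_natCast_add_one_nonpos (by linarith) (by linarith) hj

theorem rhoC_zero (α : ℝ) : rhoC α 0 = Gamma (α + 1) / Gamma (α / 2 + 1) ^ 2 := by
  simp [rhoC, sq]

/-- For `1 < α ≤ 2` and `j ≥ 1` one has `ρ_j^{(α)} ≤ 0`, while
`ρ₀^{(α)} = Γ(α+1)/Γ(α/2+1)² ≥ 0`. -/
theorem stmt13 (α : ℝ) (h1 : 1 < α) (h2 : α ≤ 2) :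
    (∀ j : ℕ, 1 ≤ j → rhoC α j ≤ 0) ∧
      rhoC α 0 = Real.Gamma (α + 1) / (Real.Gamma (α / 2 + 1)) ^ 2 ∧
      0 ≤ rhoC α 0 := by
  refine ⟨fun j hj => rhoC_nonpos (by linarith) h2 hj, rhoC_zero α, ?_⟩
  rw [rhoC_zero]
  exact div_nonneg (Gamma_pos_of_pos (by linarith)).le (sq_nonneg _)
end

section
/- Let T_n = [t_{|i−j|}] be a real symmetric n×n Toeplitz matrix whose entries satisfy t₀ > 0, t₁ < t₂ < ⋯ < t_{n−1} < 0, and t₀ + 2∑_{i=1}^{n−1} t_i > 0. Let H_n(T_n) be the Hankel matrix whose constant antidiagonals equal t₂, …, t_{n−1}, 0, 0, 0, t_{n−1}, …, t₂, and define the τ matrix τ(T_n) = T_n − H_n(T_n). Then every eigenvalue λ of τ(T_n)^{−1}T_n satisfies 1/2 < λ < 3/2. -/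
/-!
Put `P = T + H` and `Q = T - 3H`. Every off-diagonal entry of `P` is `≤ 0`, and in each row the
Toeplitz and Hankel parts pick up disjoint sets of the indices `1, …, n-1`, so each row of `P`
sums to at least `t₀ + 2 ∑ tᵢ > 0`: `P` is strictly diagonally dominant with positive diagonal.
Off the diagonal `H` is `0` or some `t_k` with `|i - j| ≤ k`, and then
`t_{|i-j|} ≤ t_k ≤ 0` gives `|t_{|i-j|} - 3 t_k| ≤ -t_{|i-j|} - t_k`, so `Q` is dominated by `P`
and is strictly diagonally dominant too. These matrices form a convex cone of invertible matrices
(Gershgorin). Finally `τ = (P + Q)/2` and `μ τ - T = ((2μ - 3)/4) P + ((2μ - 1)/4) Q`, which for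
`μ ≤ 1/2` or `μ ≥ 3/2` is `±` an element of the cone, so `μ` is not an eigenvalue of `τ⁻¹ T`.
-/

/-- The real symmetric Toeplitz matrix `T_n = [t_{|i−j|}]`. -/
def ToepAbs (n : ℕ) (t : ℕ → ℝ) : Matrix (Fin n) (Fin n) ℝ :=
  Matrix.of fun i j => t (((i : ℤ) - (j : ℤ)).natAbs)

/-- The Hankel correction `H_n(T_n)` whose constant antidiagonals (1-based index sum
`s = i + j` running over `2, …, 2n`) are `t₂, …, t_{n−1}, 0, 0, 0, t_{n−1}, …, t₂`. -/
def HankCorr (n : ℕ) (t : ℕ → ℝ) : Matrix (Fin n) (Fin n) ℝ :=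
  Matrix.of fun i j =>
    if (i : ℕ) + (j : ℕ) + 2 ≤ n - 1 then t ((i : ℕ) + (j : ℕ) + 2)
    else if n + 3 ≤ (i : ℕ) + (j : ℕ) + 2 then t (2 * n - (i : ℕ) - (j : ℕ))
    else 0

/-- The natural τ approximation `τ(T_n) = T_n − H_n(T_n)`. -/
def tauMat (n : ℕ) (t : ℕ → ℝ) : Matrix (Fin n) (Fin n) ℝ :=
  ToepAbs n t - HankCorr n t

open Finset Matrix

namespace Matrix

variable {ι : Type*} [Fintype ι] [DecidableEq ι]

/-- Comparing with `M i i` rather than `|M i i|` forces a positive diagonal, which makes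
these matrices a convex cone. -/
def IsStrictDiagDominant (M : Matrix ι ι ℝ) : Prop :=
  ∀ i, ∑ j ∈ univ.erase i, |M i j| < M i i

namespace IsStrictDiagDominant

variable {A B : Matrix ι ι ℝ}

theorem det_ne_zero (hA : A.IsStrictDiagDominant) : A.det ≠ 0 :=
  det_ne_zero_of_sum_row_lt_diag fun i => by
    have hlt := hA i
    rwa [Real.norm_eq_abs, abs_of_pos ((sum_nonneg fun j _ => abs_nonneg _).trans_lt hlt)]

theorem smul_add_smul (hA : A.IsStrictDiagDominant) (hB : B.IsStrictDiagDominant)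
    {a b : ℝ} (ha : 0 ≤ a) (hb : 0 ≤ b) (hab : 0 < a + b) :
    (a • A + b • B).IsStrictDiagDominant := by
  intro i
  have hrow : ∑ j ∈ univ.erase i, |(a • A + b • B) i j|
      ≤ a * ∑ j ∈ univ.erase i, |A i j| + b * ∑ j ∈ univ.erase i, |B i j| := by
    simp only [mul_sum, ← sum_add_distrib]
    gcongr with j
    simp only [add_apply, smul_apply, smul_eq_mul]
    calc |a * A i j + b * B i j| ≤ |a * A i j| + |b * B i j| := abs_add_le _ _
      _ = a * |A i j| + b * |B i j| := by rw [abs_mul, abs_mul, abs_of_nonneg ha, abs_of_nonneg hb]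
  have hgap : a * ∑ j ∈ univ.erase i, |A i j| + b * ∑ j ∈ univ.erase i, |B i j|
      < a * A i i + b * B i i := by
    rcases ha.eq_or_lt with rfl | ha'
    · nlinarith [hB i]
    · nlinarith [hA i, hB i]
  simpa only [add_apply, smul_apply, smul_eq_mul] using hrow.trans_lt hgap

theorem mono (hA : A.IsStrictDiagDominant) (hoff : ∀ i j, i ≠ j → |B i j| ≤ |A i j|)
    (hdiag : ∀ i, A i i ≤ B i i) : B.IsStrictDiagDominant := fun i =>
  calc ∑ j ∈ univ.erase i, |B i j| ≤ ∑ j ∈ univ.erase i, |A i j| :=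
        sum_le_sum fun j hj => hoff i j (ne_of_mem_erase hj).symm
    _ < A i i := hA i
    _ ≤ B i i := hdiag i

end IsStrictDiagDominant

theorem isStrictDiagDominant_of_sum_row_pos {M : Matrix ι ι ℝ}
    (hoff : ∀ i j, i ≠ j → M i j ≤ 0) (hrow : ∀ i, 0 < ∑ j, M i j) :
    M.IsStrictDiagDominant := fun i => by
  have habs : ∑ j ∈ univ.erase i, |M i j| = -∑ j ∈ univ.erase i, M i j := by
    rw [← sum_neg_distrib]
    exact sum_congr rfl fun j hj => abs_of_nonpos (hoff i j (ne_of_mem_erase hj).symm)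
  rw [habs, sum_erase_eq_sub (mem_univ i)]
  linarith [hrow i]

theorem det_smul_sub_eq_zero_of_mem_spectrum {K : Type*} [Field K] {A B : Matrix ι ι K} {μ : K}
    (hA : IsUnit A.det) (hμ : μ ∈ spectrum K (A⁻¹ * B)) : (μ • A - B).det = 0 := by
  by_contra h
  refine spectrum.mem_iff.mp hμ ?_
  have hfactor : algebraMap K (Matrix ι ι K) μ - A⁻¹ * B = A⁻¹ * (μ • A - B) := by
    rw [Matrix.mul_sub, Matrix.mul_smul, nonsing_inv_mul _ hA, Algebra.algebraMap_eq_smul_one]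
  rw [hfactor, isUnit_iff_isUnit_det, det_mul]
  exact (isUnit_nonsing_inv_det A hA).mul (isUnit_iff_ne_zero.mpr h)

end Matrix

section ToeplitzPlusHankel

variable {n : ℕ} {t : ℕ → ℝ}

theorem sum_toepAbs_row (i : Fin n) :
    ∑ j, ToepAbs n t i j = t 0 + ∑ k ∈ Icc 1 (i : ℕ), t k + ∑ k ∈ Icc 1 (n - 1 - i), t k := by
  obtain ⟨i, hi⟩ := i
  have hsplit : range n = range i ∪ {i} ∪ Ico (i + 1) n := by
    ext j; simp only [mem_union, mem_range, mem_singleton, mem_Ico]; omega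
  simp only [ToepAbs, of_apply]
  rw [Fin.sum_univ_eq_sum_range (fun j => t (((i : ℤ) - (j : ℤ)).natAbs)), hsplit,
    sum_union (disjoint_left.mpr fun j => by
      simp only [mem_union, mem_range, mem_singleton, mem_Ico]; omega),
    sum_union (disjoint_left.mpr fun j => by simp only [mem_range, mem_singleton]; omega),
    sum_singleton, sub_self, Int.natAbs_zero]
  have hlow : ∑ j ∈ range i, t (((i : ℤ) - (j : ℤ)).natAbs) = ∑ k ∈ Icc 1 i, t k := by
    refine sum_nbij' (fun j => i - j) (fun k => i - k) ?_ ?_ ?_ ?_ ?_ <;> intro j hj <;>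
      simp only [mem_range, mem_Icc] at hj ⊢ <;> first | omega | (congr 1; omega)
  have hhigh : ∑ j ∈ Ico (i + 1) n, t (((i : ℤ) - (j : ℤ)).natAbs) =
      ∑ k ∈ Icc 1 (n - 1 - i), t k := by
    refine sum_nbij' (fun j => j - i) (fun k => k + i) ?_ ?_ ?_ ?_ ?_ <;> intro j hj <;>
      simp only [mem_Ico, mem_Icc] at hj ⊢ <;> first | omega | (congr 1; omega)
  rw [hlow, hhigh]
  ring

theorem sum_hankCorr_row (i : Fin n) :
    ∑ j, HankCorr n t i j =
      ∑ k ∈ Icc ((i : ℕ) + 2) (n - 1), t k + ∑ k ∈ Icc (n + 1 - i) (n - 1), t k := by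
  obtain ⟨i, hi⟩ := i
  have hsplit : ∀ j : ℕ, (if i + j + 2 ≤ n - 1 then t (i + j + 2)
      else if n + 3 ≤ i + j + 2 then t (2 * n - i - j) else 0) =
      (if i + j + 2 ≤ n - 1 then t (i + j + 2) else 0) +
      (if n + 3 ≤ i + j + 2 then t (2 * n - i - j) else 0) := by
    intro j; split_ifs <;> first | omega | simp only [add_zero, zero_add]
  simp only [HankCorr, of_apply]
  rw [Fin.sum_univ_eq_sum_range (fun j => if i + j + 2 ≤ n - 1 then t (i + j + 2)
      else if n + 3 ≤ i + j + 2 then t (2 * n - i - j) else 0),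
    sum_congr rfl fun j _ => hsplit j, sum_add_distrib, ← sum_filter, ← sum_filter]
  congr 1
  · refine sum_nbij' (fun j => i + j + 2) (fun k => k - i - 2) ?_ ?_ ?_ ?_ ?_ <;> intro j hj <;>
      simp only [mem_filter, mem_range, mem_Icc] at hj ⊢ <;> omega
  · refine sum_nbij' (fun j => 2 * n - i - j) (fun k => 2 * n - i - k) ?_ ?_ ?_ ?_ ?_ <;>
      intro j hj <;> simp only [mem_filter, mem_range, mem_Icc] at hj ⊢ <;> omega

theorem Fin.natAbs_sub_mem_Icc_of_ne {i j : Fin n} (hij : i ≠ j) :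
    ((i : ℤ) - (j : ℤ)).natAbs ∈ Icc 1 (n - 1) := by
  have := Fin.val_ne_of_ne hij
  simp only [mem_Icc]
  omega

theorem toepAbs_apply_nonpos (ht : ∀ k ∈ Icc 1 (n - 1), t k ≤ 0) {i j : Fin n} (hij : i ≠ j) :
    ToepAbs n t i j ≤ 0 :=
  ht _ (Fin.natAbs_sub_mem_Icc_of_ne hij)

theorem hankCorr_apply_eq_zero_or (i j : Fin n) :
    HankCorr n t i j = 0 ∨
      ∃ k ∈ Icc 1 (n - 1), ((i : ℤ) - (j : ℤ)).natAbs ≤ k ∧ HankCorr n t i j = t k := by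
  obtain ⟨i, hi⟩ := i
  obtain ⟨j, hj⟩ := j
  simp only [HankCorr, of_apply, mem_Icc]
  split_ifs
  · exact Or.inr ⟨i + j + 2, by omega, by omega, rfl⟩
  · exact Or.inr ⟨2 * n - i - j, by omega, by omega, rfl⟩
  · exact Or.inl rfl

theorem hankCorr_apply_nonpos (ht : ∀ k ∈ Icc 1 (n - 1), t k ≤ 0) (i j : Fin n) :
    HankCorr n t i j ≤ 0 := by
  rcases hankCorr_apply_eq_zero_or i j with h | ⟨k, hk, -, h⟩
  · exact h.le
  · exact h ▸ ht k hk

theorem sum_Icc_le_sum_Icc_add_sum_Icc {M : Type*} [AddCommMonoid M] [PartialOrder M]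
    [IsOrderedAddMonoid M] {f : ℕ → M} {m a b N : ℕ} (haN : a ≤ N) (hab : a < b)
    (hmb : m ≤ b) (hf : ∀ k ∈ Icc m N, f k ≤ 0) :
    ∑ k ∈ Icc m N, f k ≤ ∑ k ∈ Icc m a, f k + ∑ k ∈ Icc b N, f k := by
  have hdisj : Disjoint (Icc m a) (Icc b N) := disjoint_left.mpr fun k => by
    simp only [mem_Icc]; omega
  have hsub : Icc m a ∪ Icc b N ⊆ Icc m N := fun k => by
    simp only [mem_union, mem_Icc]; omega
  rw [← sum_union hdisj, ← sum_sdiff hsub]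
  exact add_le_of_nonpos_left (sum_nonpos fun k hk => hf k (mem_sdiff.mp hk).1)

theorem isStrictDiagDominant_toepAbs_add_hankCorr (ht : ∀ k ∈ Icc 1 (n - 1), t k ≤ 0)
    (hsum : 0 < t 0 + 2 * ∑ k ∈ Icc 1 (n - 1), t k) :
    (ToepAbs n t + HankCorr n t).IsStrictDiagDominant := by
  refine isStrictDiagDominant_of_sum_row_pos (fun i j hij => ?_) (fun i => ?_)
  · exact add_nonpos (toepAbs_apply_nonpos ht hij) (hankCorr_apply_nonpos ht i j)
  · have hi := i.isLt
    have hleft := sum_Icc_le_sum_Icc_add_sum_Icc (a := i) (b := i + 2)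
      (by omega) (by omega) (by omega) ht
    have hright := sum_Icc_le_sum_Icc_add_sum_Icc (a := n - 1 - i) (b := n + 1 - i)
      (by omega) (by omega) (by omega) ht
    simp only [Matrix.add_apply, sum_add_distrib, sum_toepAbs_row, sum_hankCorr_row]
    linarith

theorem abs_sub_three_mul_le {x y : ℝ} (hxy : x ≤ y) (hy : y ≤ 0) : |x - 3 * y| ≤ -(x + y) := by
  rw [abs_le]
  constructor <;> linarith

theorem isStrictDiagDominant_toepAbs_sub_three_smul_hankCorr
    (hmono : MonotoneOn t (Set.Icc 1 (n - 1))) (ht : ∀ k ∈ Icc 1 (n - 1), t k ≤ 0)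
    (hsum : 0 < t 0 + 2 * ∑ k ∈ Icc 1 (n - 1), t k) :
    (ToepAbs n t - (3 : ℝ) • HankCorr n t).IsStrictDiagDominant := by
  refine (isStrictDiagDominant_toepAbs_add_hankCorr ht hsum).mono
    (fun i j hij => ?_) (fun i => ?_)
  · have hT := toepAbs_apply_nonpos ht hij
    rw [Matrix.sub_apply, Matrix.add_apply, Matrix.smul_apply, smul_eq_mul,
      abs_of_nonpos (add_nonpos hT (hankCorr_apply_nonpos ht i j))]
    rcases hankCorr_apply_eq_zero_or (t := t) i j with h | ⟨k, hk, hdist, h⟩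
    · rw [h, mul_zero, sub_zero, add_zero, abs_of_nonpos hT]
    · rw [h]
      exact abs_sub_three_mul_le
        (hmono (mem_Icc.mp (Fin.natAbs_sub_mem_Icc_of_ne hij)) (mem_Icc.mp hk) hdist) (ht k hk)
  · simp only [Matrix.sub_apply, Matrix.add_apply, Matrix.smul_apply, smul_eq_mul]
    linarith [hankCorr_apply_nonpos ht i i]

section TauBounds

variable (hmono : MonotoneOn t (Set.Icc 1 (n - 1)))
  (ht : ∀ k ∈ Icc 1 (n - 1), t k ≤ 0) (hsum : 0 < t 0 + 2 * ∑ k ∈ Icc 1 (n - 1), t k)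
include hmono ht hsum

theorem isStrictDiagDominant_tauMat : (tauMat n t).IsStrictDiagDominant := by
  convert (isStrictDiagDominant_toepAbs_add_hankCorr ht hsum).smul_add_smul
    (isStrictDiagDominant_toepAbs_sub_three_smul_hankCorr hmono ht hsum)
    (a := 1 / 2) (b := 1 / 2) (by norm_num) (by norm_num) (by norm_num) using 1
  unfold tauMat
  module

theorem det_smul_tauMat_sub_toepAbs_ne_zero {a : ℝ} (ha : a ≤ 1 / 2 ∨ 3 / 2 ≤ a) :
    (a • tauMat n t - ToepAbs n t).det ≠ 0 := by
  have hP := isStrictDiagDominant_toepAbs_add_hankCorr ht hsum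
  have hQ := isStrictDiagDominant_toepAbs_sub_three_smul_hankCorr hmono ht hsum
  rcases ha with ha | ha
  · rw [← neg_sub, det_neg]
    refine mul_ne_zero (pow_ne_zero _ (neg_ne_zero.mpr one_ne_zero)) ?_
    convert (hP.smul_add_smul hQ (a := (3 - 2 * a) / 4) (b := (1 - 2 * a) / 4) (by linarith)
      (by linarith) (by linarith)).det_ne_zero using 2
    unfold tauMat
    module
  · convert (hP.smul_add_smul hQ (a := (2 * a - 3) / 4) (b := (2 * a - 1) / 4) (by linarith)
      (by linarith) (by linarith)).det_ne_zero using 2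
    unfold tauMat
    module

end TauBounds

end ToeplitzPlusHankel

theorem stmt14_general (n : ℕ) (t : ℕ → ℝ)
    (hmono : ∀ i : ℕ, 1 ≤ i → i + 1 ≤ n - 1 → t i < t (i + 1))
    (hneg : t (n - 1) < 0)
    (hsum : 0 < t 0 + 2 * ∑ i ∈ Finset.Icc 1 (n - 1), t i) :
    ∀ μ ∈ spectrum ℝ ((tauMat n t)⁻¹ * ToepAbs n t), 1 / 2 < μ ∧ μ < 3 / 2 := by
  intro μ hμ
  have hmono' : MonotoneOn t (Set.Icc 1 (n - 1)) :=
    (strictMonoOn_of_lt_succ Set.ordConnected_Icc fun k _ hk hk' => by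
      rw [Order.succ_eq_add_one] at hk' ⊢
      exact hmono k hk.1 hk'.2).monotoneOn
  have ht : ∀ k ∈ Icc 1 (n - 1), t k ≤ 0 := fun k hk => by
    rw [mem_Icc] at hk
    exact (hmono' hk ⟨hk.1.trans hk.2, le_rfl⟩ hk.2).trans hneg.le
  have hτ : IsUnit (tauMat n t).det :=
    isUnit_iff_ne_zero.mpr (isStrictDiagDominant_tauMat hmono' ht hsum).det_ne_zero
  by_contra! hμ'
  refine det_smul_tauMat_sub_toepAbs_ne_zero hmono' ht hsum ?_
    (det_smul_sub_eq_zero_of_mem_spectrum hτ hμ)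
  rcases le_or_gt μ (1 / 2) with h | h
  exacts [Or.inl h, Or.inr (hμ' h)]

/-- If `t₀ > 0`, `t₁ < t₂ < ⋯ < t_{n−1} < 0` and `t₀ + 2∑_{i=1}^{n−1} t_i > 0`, then every
eigenvalue `λ` of `τ(T_n)⁻¹ T_n` satisfies `1/2 < λ < 3/2`. -/
theorem stmt14 (n : ℕ) (t : ℕ → ℝ)
    (ht0 : 0 < t 0)
    (hmono : ∀ i : ℕ, 1 ≤ i → i + 1 ≤ n - 1 → t i < t (i + 1))
    (hneg : t (n - 1) < 0)
    (hsum : 0 < t 0 + 2 * ∑ i ∈ Finset.Icc 1 (n - 1), t i) :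
    ∀ μ ∈ spectrum ℝ ((tauMat n t)⁻¹ * ToepAbs n t), 1 / 2 < μ ∧ μ < 3 / 2 :=
  stmt14_general n t hmono hneg hsum
end
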